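/- arXiv:1311.2285 — 3 statements merged into one kernel-verified Lean document; each statement's English description precedes it below -/
import Mathlib

section
/- Let D be an ultrafilter on a set I and let X be a GO space. Then X is D-compact if and only if X is weakly [ν,ν]-compact for every infinite regular cardinal ν such that D is ν-decomposable. -/
universe u v

open Set Cardinal Filter Topology TopologicalSpace

section Defs

variable {X : Type u} [LinearOrder X]

/-- A subset `Y` of a linear order `X`, having no maximum, is `lam`-full in `X` on the right
if for every `y ∈ Y` the set `⋃ y' ∈ Y, (y, y')` (intervals computed in `X`)
has cardinality at least `lam`. -/
def FullRight (lam : Cardinal.{u}) (Y : Set X) : Prop :=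
  (¬ ∃ m ∈ Y, ∀ y ∈ Y, y ≤ m) ∧
    ∀ y ∈ Y, lam ≤ #(⋃ y' ∈ Y, Ioo y y')

/-- A subset `Y` of a linear order `X`, having no minimum, is `lam`-full in `X` on the left
if for every `y ∈ Y` the set `⋃ y' ∈ Y, (y', y)` (intervals computed in `X`)
has cardinality at least `lam`. -/
def FullLeft (lam : Cardinal.{u}) (Y : Set X) : Prop :=
  (¬ ∃ m ∈ Y, ∀ y ∈ Y, m ≤ y) ∧
    ∀ y ∈ Y, lam ≤ #(⋃ y' ∈ Y, Ioo y' y)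

/-- The pair `(A, B)` is a gap of the space `X`: `A`, `B` are open, `A ∪ B = X`,
every element of `A` is less than every element of `B`, `A` has no maximum and `B` has
no minimum (`A` or `B` may be empty). -/
def IsGap [TopologicalSpace X] (A B : Set X) : Prop :=
  IsOpen A ∧ IsOpen B ∧ A ∪ B = Set.univ ∧ (∀ a ∈ A, ∀ b ∈ B, a < b) ∧
    (¬ ∃ m ∈ A, ∀ a ∈ A, a ≤ m) ∧ (¬ ∃ m ∈ B, ∀ b ∈ B, m ≤ b)

/-- The pair `(A, B)` is a pseudo-gap of the space `X`: `A`, `B` are open and nonempty,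
`A ∪ B = X`, every element of `A` is less than every element of `B`, and either `A` has a
maximum and `B` has no minimum, or `A` has no maximum and `B` has a minimum. -/
def IsPseudoGap [TopologicalSpace X] (A B : Set X) : Prop :=
  IsOpen A ∧ IsOpen B ∧ A ∪ B = Set.univ ∧ (∀ a ∈ A, ∀ b ∈ B, a < b) ∧
    A.Nonempty ∧ B.Nonempty ∧
    (((∃ m ∈ A, ∀ a ∈ A, a ≤ m) ∧ ¬ ∃ m ∈ B, ∀ b ∈ B, m ≤ b) ∨
      ((¬ ∃ m ∈ A, ∀ a ∈ A, a ≤ m) ∧ ∃ m ∈ B, ∀ b ∈ B, m ≤ b))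

/-- The cofinality of `A`: the least cardinality of a subset of `A` cofinal in `A`. -/
noncomputable def cofinCard (A : Set X) : Cardinal.{u} :=
  sInf {c | ∃ S : Set X, S ⊆ A ∧ (∀ a ∈ A, ∃ s ∈ S, a ≤ s) ∧ c = #S}

/-- The coinitiality of `B`: the least cardinality of a subset of `B` coinitial in `B`. -/
noncomputable def coinitCard (B : Set X) : Cardinal.{u} :=
  sInf {c | ∃ S : Set X, S ⊆ B ∧ (∀ b ∈ B, ∃ s ∈ S, s ≤ b) ∧ c = #S}

/-- `mu` is a type of the gap `(A, B)`: `mu` is the cofinality of `A` or the coinitiality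
of `B`. -/
def IsGapType (mu : Cardinal.{u}) (A B : Set X) : Prop :=
  mu = cofinCard A ∨ mu = coinitCard B

/-- `mu` is the type of the pseudo-gap `(A, B)`: the cofinality of `A` if `B` has a minimum,
the coinitiality of `B` if `A` has a maximum. -/
def IsPseudoGapType (mu : Cardinal.{u}) (A B : Set X) : Prop :=
  ((∃ m ∈ B, ∀ b ∈ B, m ≤ b) ∧ mu = cofinCard A) ∨
    ((∃ m ∈ A, ∀ a ∈ A, a ≤ m) ∧ mu = coinitCard B)

end Defs

/-- A topological space is `[ν, ν]`-compact if every open cover of cardinality at most `ν`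
has a subcover of cardinality less than `ν`. -/
def NuNuCompact (X : Type u) [TopologicalSpace X] (ν : Cardinal.{u}) : Prop :=
  ∀ 𝒰 : Set (Set X), (∀ U ∈ 𝒰, IsOpen U) → ⋃₀ 𝒰 = Set.univ → #𝒰 ≤ ν →
    ∃ 𝒱 ⊆ 𝒰, #𝒱 < ν ∧ ⋃₀ 𝒱 = Set.univ

/-- A topological space is weakly `[ν, ν]`-compact if every open cover of cardinality at
most `ν` has a subfamily of cardinality less than `ν` whose union is dense. -/
def WeakNuNuCompact (X : Type u) [TopologicalSpace X] (ν : Cardinal.{u}) : Prop :=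
  ∀ 𝒰 : Set (Set X), (∀ U ∈ 𝒰, IsOpen U) → ⋃₀ 𝒰 = Set.univ → #𝒰 ≤ ν →
    ∃ 𝒱 ⊆ 𝒰, #𝒱 < ν ∧ Dense (⋃₀ 𝒱)

/-- A topological space is initially `lam`-compact if every open cover of cardinality at
most `lam` has a finite subcover. -/
def InitiallyCompact (X : Type u) [TopologicalSpace X] (lam : Cardinal.{u}) : Prop :=
  ∀ 𝒰 : Set (Set X), (∀ U ∈ 𝒰, IsOpen U) → ⋃₀ 𝒰 = Set.univ → #𝒰 ≤ lam →
    ∃ 𝒱 ⊆ 𝒰, 𝒱.Finite ∧ ⋃₀ 𝒱 = Set.univ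

/-- A topological space is weakly initially `lam`-compact if every open cover of cardinality
at most `lam` has a finite subfamily whose union is dense. -/
def WeakInitiallyCompact (X : Type u) [TopologicalSpace X] (lam : Cardinal.{u}) : Prop :=
  ∀ 𝒰 : Set (Set X), (∀ U ∈ 𝒰, IsOpen U) → ⋃₀ 𝒰 = Set.univ → #𝒰 ≤ lam →
    ∃ 𝒱 ⊆ 𝒰, 𝒱.Finite ∧ Dense (⋃₀ 𝒱)

/-- The sequence `x` `D`-converges to `p`: for every open neighbourhood `U` of `p`,
`{i | x i ∈ U} ∈ D`. -/
def DConv {I : Type v} {X : Type u} [TopologicalSpace X] (D : Ultrafilter I)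
    (x : I → X) (p : X) : Prop :=
  ∀ U : Set X, IsOpen U → p ∈ U → {i | x i ∈ U} ∈ D

/-- `X` is `D`-compact: every `I`-indexed sequence of elements of `X` `D`-converges to some
point of `X`. -/
def DCompact {I : Type v} (D : Ultrafilter I) (X : Type u) [TopologicalSpace X] : Prop :=
  ∀ x : I → X, ∃ p : X, DConv D x p

/-- `p` is a `D`-limit point of the sequence of sets `Y`: for every neighbourhood `U`
of `p`, `{i | U ∩ Y i ≠ ∅} ∈ D`. -/
def DLimitPt {I : Type v} {X : Type u} [TopologicalSpace X] (D : Ultrafilter I)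
    (Y : I → Set X) (p : X) : Prop :=
  ∀ U ∈ nhds p, {i | (U ∩ Y i).Nonempty} ∈ D

/-- `X` is `D`-pseudocompact: every `I`-indexed sequence of nonempty open sets of `X` has a
`D`-limit point. -/
def DPseudocompact {I : Type v} (D : Ultrafilter I) (X : Type u) [TopologicalSpace X] : Prop :=
  ∀ O : I → Set X, (∀ i, IsOpen (O i)) → (∀ i, (O i).Nonempty) → ∃ p : X, DLimitPt D O p

/-- The ultrafilter `D` is `ν`-decomposable: there is `f : I → ν` such that the preimage of
every subset of `ν` of cardinality less than `ν` is not in `D`. -/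
def Decomposable {I : Type v} (D : Ultrafilter I) (ν : Cardinal.{u}) : Prop :=
  ∃ f : I → ν.ord.ToType, ∀ S : Set ν.ord.ToType, #S < ν → f ⁻¹' S ∉ D

/-!
Forward direction: enumerate an open cover along `ν` and pick, for each `α < ν`, a point
outside the union of the members with smaller index. Composing with a decomposing map
`f : I → ν`, the `D`-limit of these points lies in some member `U`, which forces
`f ⁻¹' Iic (index U) ∈ D`, a set of fewer than `ν` indices. So `X` is even `[ν, ν]`-compact.

Backward direction: a sequence with no `D`-limit pushes `D` forward to a nonconvergent
ultrafilter `𝒰` on `X`. At every point one of the two closed rays is `𝒰`-null (else `{p} ∈ 𝒰`),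
and convex neighbourhoods that are `𝒰`-null show that the cut `{p | Iic p ∈ 𝒰}` is clopen.
Up to order duality, `𝒰` lives on the clopen set `A = {p | Iic p ∉ 𝒰}`, which has no maximum.
With `ν = cof A`, the rays `Iio s` for `s` in a cofinal subset of `A` of size `ν`, together
with `Aᶜ`, form a cover with no dense subfamily of size `< ν`; `ν` is regular, and sending
each point of `A` to the index of a cofinal element above it shows that `𝒰` is
`ν`-decomposable.
-/

section Cofinality

open Order

variable {α : Type u} [LinearOrder α]

theorem Order.exists_forall_lt_of_mk_lt_cof {s : Set α} (hs : #s < cof α) : ∃ b, ∀ a ∈ s, a < b :=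
  not_isCofinal_iff.1 fun h => (cof_le h).not_gt hs

theorem mk_Iic_toType_ord_lt {c : Cardinal.{u}} (hc : ℵ₀ ≤ c) (γ : c.ord.ToType) :
    #(Iic γ) < c := by
  simpa using mk_Iic_lt γ (by simp) (by simpa using hc)

theorem Order.exists_isCofinal_equiv_cof :
    ∃ S : Set α, IsCofinal S ∧ Nonempty ((cof α).ord.ToType ≃ S) := by
  obtain ⟨S, hS, hSc⟩ := exists_cof_eq α
  exact ⟨S, hS, Cardinal.eq.1 (by simp [hSc])⟩

/-- Bounding initial segments of a cofinal enumeration of length `cof α` by elements of `α`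
turns a cofinal subset of `(cof α).ord` into a cofinal subset of `α` of no larger size. -/
theorem Order.isRegular_cof [Nonempty α] [NoMaxOrder α] : (cof α).IsRegular := by
  refine ⟨aleph0_le_cof, ?_⟩
  obtain ⟨S, hS, ⟨e⟩⟩ := exists_isCofinal_equiv_cof (α := α)
  rw [← Ordinal.cof_toType, le_cof_iff]
  intro T hT
  by_contra! hTlt
  have hbound (t : (cof α).ord.ToType) : ∃ b, ∀ a ∈ (fun γ => (e γ : α)) '' Iic t, a < b :=
    exists_forall_lt_of_mk_lt_cof (mk_image_le.trans_lt (mk_Iic_toType_ord_lt aleph0_le_cof t))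
  choose b hb using hbound
  refine (cof_le (s := b '' T) fun a => ?_).not_gt (mk_image_le.trans_lt hTlt)
  obtain ⟨s, hsS, has⟩ := hS a
  obtain ⟨t, htT, ht⟩ := hT (e.symm ⟨s, hsS⟩)
  refine ⟨b t, mem_image_of_mem b htT, has.trans (hb t s ⟨_, ht, ?_⟩).le⟩
  simp

theorem decomposable_cof {I : Type v} (D : Ultrafilter I) (f : I → α)
    (hf : ∀ a, f ⁻¹' Iic a ∉ D) : Decomposable D (cof α) := by
  obtain ⟨S, hS, ⟨e⟩⟩ := exists_isCofinal_equiv_cof (α := α)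
  choose s hsS hs using hS
  refine ⟨fun i => e.symm ⟨s (f i), hsS _⟩, fun T hT hTD => ?_⟩
  obtain ⟨b, hb⟩ := exists_forall_lt_of_mk_lt_cof (s := (fun γ => (e γ : α)) '' T)
    (mk_image_le.trans_lt hT)
  refine hf b (mem_of_superset hTD fun i hi => (hs (f i)).trans ?_)
  simpa using (hb _ (mem_image_of_mem _ hi)).le

theorem Decomposable.of_map {I : Type v} {X : Type u} {D : Ultrafilter I} {x : I → X}
    {ν : Cardinal.{u}} (h : Decomposable (D.map x) ν) : Decomposable D ν :=
  let ⟨f, hf⟩ := h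
  ⟨f ∘ x, hf⟩

end Cofinality

section GOSpace

variable {X : Type u} [LinearOrder X]

theorem Ultrafilter.Iic_mem_iff_of_ordConnected {𝒰 : Ultrafilter X} {U : Set X}
    (hU : U.OrdConnected) (hU𝒰 : U ∉ 𝒰) {p q : X} (hp : p ∈ U) (hq : q ∈ U) :
    Iic p ∈ 𝒰 ↔ Iic q ∈ 𝒰 := by
  wlog hpq : p ≤ q generalizing p q
  · exact (this hq hp (le_of_not_ge hpq)).symm
  have hIoc : Ioc p q ∉ 𝒰 := fun h =>
    hU𝒰 (mem_of_superset h (Ioc_subset_Icc_self.trans (hU.out hp hq)))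
  rw [← Iic_union_Ioc_eq_Iic hpq, Ultrafilter.union_mem_iff, or_iff_left hIoc]

variable [TopologicalSpace X]

theorem isOpen_Iio_of_ordConnected_basis [T1Space X] {𝓑 : Set (Set X)}
    (hB : IsTopologicalBasis 𝓑) (hconv : ∀ s ∈ 𝓑, s.OrdConnected) (a : X) : IsOpen (Iio a) := by
  refine isOpen_iff_forall_mem_open.2 fun p hp => ?_
  obtain ⟨V, hV, hpV, hVa⟩ := hB.exists_subset_of_mem_open hp.ne isOpen_compl_singleton
  exact ⟨V, fun q hq => not_le.1 fun haq => hVa ((hconv V hV).out hpV hq ⟨hp.le, haq⟩) rfl,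
    hB.isOpen hV, hpV⟩

theorem isOpen_Ioi_of_ordConnected_basis [T1Space X] {𝓑 : Set (Set X)}
    (hB : IsTopologicalBasis 𝓑) (hconv : ∀ s ∈ 𝓑, s.OrdConnected) (a : X) : IsOpen (Ioi a) :=
  have : T1Space Xᵒᵈ := ‹T1Space X›
  isOpen_Iio_of_ordConnected_basis (X := Xᵒᵈ) hB (fun s hs => (hconv s hs).dual) a

theorem Ultrafilter.isClopen_setOf_Iic_mem {𝒰 : Ultrafilter X}
    (h : ∀ p, ∃ U ∈ 𝓝 p, U.OrdConnected ∧ U ∉ 𝒰) : IsClopen {p | Iic p ∈ 𝒰} := by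
  have hconst (p : X) : ∀ᶠ q in 𝓝 p, (Iic q ∈ 𝒰 ↔ Iic p ∈ 𝒰) := by
    obtain ⟨U, hU, hconv, hU𝒰⟩ := h p
    exact mem_of_superset hU fun q hq =>
      Iic_mem_iff_of_ordConnected hconv hU𝒰 hq (mem_of_mem_nhds hU)
  refine ⟨isOpen_compl_iff.1 (isOpen_iff_eventually.2 fun p hp => ?_),
    isOpen_iff_eventually.2 fun p hp => ?_⟩
  · filter_upwards [hconst p] with q hq using fun h => hp (hq.1 h)
  · filter_upwards [hconst p] with q hq using hq.2 hp

end GOSpace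

section Compactness

variable {I : Type v} {X : Type u} [TopologicalSpace X]

theorem NuNuCompact.weakNuNuCompact {ν : Cardinal.{u}} (h : NuNuCompact X ν) :
    WeakNuNuCompact X ν := fun 𝒰 hopen hcover hcard =>
  let ⟨𝒱, h𝒱, hcard𝒱, hcover𝒱⟩ := h 𝒰 hopen hcover hcard
  ⟨𝒱, h𝒱, hcard𝒱, hcover𝒱 ▸ dense_univ⟩

theorem dConv_iff_le_nhds {D : Ultrafilter I} {x : I → X} {p : X} :
    DConv D x p ↔ ↑(D.map x) ≤ 𝓝 p := by
  simp only [DConv, le_nhds_iff, Ultrafilter.coe_map, Filter.mem_map]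
  exact forall_congr' fun U => forall_comm

theorem DCompact.nuNuCompact {D : Ultrafilter I} (hX : DCompact D X) {ν : Cardinal.{u}}
    (hν : ℵ₀ ≤ ν) (hD : Decomposable D ν) : NuNuCompact X ν := by
  intro 𝒰 hopen hcover hcard
  by_contra! hsmall
  obtain ⟨f, hf⟩ := hD
  obtain ⟨e⟩ : #𝒰 ≤ #ν.ord.ToType := by simpa using hcard
  have hescape (α : ν.ord.ToType) : ∃ p, p ∉ ⋃₀ (Subtype.val '' (e ⁻¹' Iio α)) := by
    refine (ne_univ_iff_exists_notMem _).1 (hsmall _ (by simp) ?_)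
    calc #(Subtype.val '' (e ⁻¹' Iio α)) ≤ #(Iio α) :=
          mk_image_le.trans (mk_preimage_of_injective _ _ e.injective)
      _ < ν := by simpa using mk_Iio_lt α (by simp)
  choose p hp using hescape
  obtain ⟨q, hq⟩ := hX (p ∘ f)
  obtain ⟨U, hU, hqU⟩ := mem_sUnion.1 (hcover ▸ mem_univ q : q ∈ ⋃₀ 𝒰)
  refine hf (Iic (e ⟨U, hU⟩)) (mk_Iic_toType_ord_lt hν _)
    (mem_of_superset (hq U (hopen U hU) hqU) fun i hi => show f i ≤ _ from ?_)
  exact not_lt.1 fun hlt => hp (f i) ⟨U, ⟨⟨U, hU⟩, hlt, rfl⟩, hi⟩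

end Compactness

section Cut

variable {X : Type u} [LinearOrder X] [TopologicalSpace X]

theorem not_weakNuNuCompact_cof (hIio : ∀ a : X, IsOpen (Iio a))
    (hIoi : ∀ a : X, IsOpen (Ioi a)) {A : Set X} (hA : IsClopen A) [Nonempty A] [NoMaxOrder A] :
    ¬ WeakNuNuCompact X (Order.cof A) := by
  intro hW
  obtain ⟨S, hS, hSc⟩ := Order.exists_cof_eq A
  set 𝒞 : Set (Set X) := insert Aᶜ ((fun s : A => Iio (s : X)) '' S)
  have hopen : ∀ U ∈ 𝒞, IsOpen U := by
    rintro U (rfl | ⟨s, -, rfl⟩)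
    exacts [hA.isClosed.isOpen_compl, hIio _]
  have hcover : ⋃₀ 𝒞 = Set.univ := by
    refine eq_univ_of_forall fun p => ?_
    by_cases hp : p ∈ A
    · obtain ⟨a, hpa⟩ := exists_gt (⟨p, hp⟩ : A)
      obtain ⟨s, hs, has⟩ := hS a
      exact ⟨_, mem_insert_of_mem _ (mem_image_of_mem _ hs), hpa.trans_le has⟩
    · exact ⟨Aᶜ, mem_insert _ _, hp⟩
  have hcard : #𝒞 ≤ Order.cof A :=
    calc #𝒞 ≤ #S + 1 := mk_insert_le.trans (add_le_add_left mk_image_le 1)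
      _ = Order.cof A := by rw [hSc, add_one_eq Order.aleph0_le_cof]
  obtain ⟨𝒱, h𝒱, h𝒱card, hdense⟩ := hW 𝒞 hopen hcover hcard
  have hinj : Function.Injective fun s : A => Iio (s : X) :=
    Iio_injective.comp Subtype.val_injective
  obtain ⟨a, ha⟩ := Order.exists_forall_lt_of_mk_lt_cof
    ((mk_preimage_of_injective _ 𝒱 hinj).trans_lt h𝒱card)
  obtain ⟨b, hab⟩ := exists_gt a
  obtain ⟨p, ⟨hpA, hap⟩, V, hV, hpV⟩ :=
    hdense.inter_open_nonempty (A ∩ Ioi ↑a) (hA.isOpen.inter (hIoi a)) ⟨b, b.2, hab⟩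
  rcases h𝒱 hV with rfl | ⟨s, -, rfl⟩
  · exact hpV hpA
  · exact lt_asymm hap (hpV.trans (ha s hV))

theorem exists_isRegular_decomposable_not_weakNuNuCompact_of_mem
    (hIio : ∀ a : X, IsOpen (Iio a)) (hIoi : ∀ a : X, IsOpen (Ioi a)) {𝒰 : Ultrafilter X}
    {A : Set X} (hA : IsClopen A) (hA𝒰 : A ∈ 𝒰) (hIic : ∀ a ∈ A, Iic a ∉ 𝒰) :
    ∃ ν : Cardinal.{u}, ν.IsRegular ∧ Decomposable 𝒰 ν ∧ ¬ WeakNuNuCompact X ν := by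
  obtain ⟨a₀, ha₀⟩ := 𝒰.nonempty_of_mem hA𝒰
  have : Nonempty A := ⟨⟨a₀, ha₀⟩⟩
  have : NoMaxOrder A := ⟨fun a => by
    by_contra! hmax
    exact hIic a a.2 (mem_of_superset hA𝒰 fun p hp => hmax ⟨p, hp⟩)⟩
  classical
  let f : X → A := fun p => if hp : p ∈ A then ⟨p, hp⟩ else ⟨a₀, ha₀⟩
  refine ⟨Order.cof A, Order.isRegular_cof, decomposable_cof 𝒰 f fun a hfa => ?_,
    not_weakNuNuCompact_cof hIio hIoi hA⟩
  refine hIic a a.2 (mem_of_superset (inter_mem hfa hA𝒰) fun p ⟨hpa, hp⟩ => ?_)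
  simpa [f, hp, ← Subtype.coe_le_coe] using hpa

theorem exists_isRegular_decomposable_not_weakNuNuCompact [T1Space X] {𝓑 : Set (Set X)}
    (hB : IsTopologicalBasis 𝓑) (hconv : ∀ s ∈ 𝓑, s.OrdConnected) {𝒰 : Ultrafilter X}
    (h𝒰 : ∀ p, ¬ (𝒰 : Filter X) ≤ 𝓝 p) :
    ∃ ν : Cardinal.{u}, ν.IsRegular ∧ Decomposable 𝒰 ν ∧ ¬ WeakNuNuCompact X ν := by
  have hIio := isOpen_Iio_of_ordConnected_basis hB hconv
  have hIoi := isOpen_Ioi_of_ordConnected_basis hB hconv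
  have hnhds (p : X) : ∃ U ∈ 𝓝 p, U.OrdConnected ∧ U ∉ 𝒰 := by
    obtain ⟨s, hs, hs𝒰⟩ := Filter.not_le.1 (h𝒰 p)
    obtain ⟨U, hU, hpU, hUs⟩ := hB.mem_nhds_iff.1 hs
    exact ⟨U, hB.mem_nhds hU hpU, hconv U hU, fun h => hs𝒰 (mem_of_superset h hUs)⟩
  have hrays : {p | Iic p ∉ 𝒰} ∪ {p | Ici p ∉ 𝒰} ∈ 𝒰 := by
    refine mem_of_superset univ_mem fun p _ => not_and_or.1 fun ⟨hIic, hIci⟩ => h𝒰 p ?_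
    refine (Filter.le_pure_iff.2 ?_).trans (pure_le_nhds p)
    simpa [Iic_inter_Ici] using inter_mem hIic hIci
  rcases Ultrafilter.union_mem_iff.1 hrays with hlow | hhigh
  · exact exists_isRegular_decomposable_not_weakNuNuCompact_of_mem hIio hIoi
      (Ultrafilter.isClopen_setOf_Iic_mem hnhds).compl hlow fun a ha => ha
  · exact exists_isRegular_decomposable_not_weakNuNuCompact_of_mem (X := Xᵒᵈ) hIoi hIio
      (Ultrafilter.isClopen_setOf_Iic_mem (X := Xᵒᵈ)
        fun p => (hnhds p).imp fun U ⟨hU, hconvU, hU𝒰⟩ => ⟨hU, hconvU.dual, hU𝒰⟩).compl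
      hhigh fun a ha => ha

end Cut

/-- A GO space is `D`-compact iff it is weakly `[ν, ν]`-compact for every infinite regular
cardinal `ν` such that `D` is `ν`-decomposable. -/
theorem stmt11 {I : Type v} (D : Ultrafilter I)
    (X : Type u) [LinearOrder X] [TopologicalSpace X] [T2Space X]
    (hGO : ∃ 𝓑 : Set (Set X), IsTopologicalBasis 𝓑 ∧ ∀ s ∈ 𝓑, s.OrdConnected) :
    DCompact D X ↔
      ∀ ν : Cardinal.{u}, ℵ₀ ≤ ν → ν.IsRegular → Decomposable D ν →
        WeakNuNuCompact X ν := by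
  obtain ⟨𝓑, hB, hconv⟩ := hGO
  refine ⟨fun hX ν hν _ hD => (hX.nuNuCompact hν hD).weakNuNuCompact, fun H x => ?_⟩
  by_contra! hx
  obtain ⟨ν, hreg, hdec, hnot⟩ := exists_isRegular_decomposable_not_weakNuNuCompact hB hconv
    (𝒰 := D.map x) fun p => dConv_iff_le_nhds.not.1 (hx p)
  exact hnot (H ν hreg.aleph0_le hreg hdec.of_map)
end

section
/- Let λ be an infinite cardinal and let X be a GO space. Then X is D-compact for some regular ultrafilter D over λ if and only if X is initially λ-compact. -/
universe u v

open Set Cardinal Filter Topology TopologicalSpace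

/-- An ultrafilter over a set is regular if there is a family of members of `D`, indexed by
the whole set, such that the intersection of every infinite subfamily is empty. -/
def IsRegularUltrafilter {κ : Type u} (D : Ultrafilter κ) : Prop :=
  ∃ Z : κ → Set κ, (∀ α, Z α ∈ D) ∧ ∀ S : Set κ, S.Infinite → ⋂ α ∈ S, Z α = ∅

/-! Forward direction: a cover of size `≤ λ` without finite subcover is
indexed by `λ`, and a regular family `Z` lets the `i`-th point avoid the finitely many members
`U α` with `i ∈ Z α`; a `D`-limit of these points lies in some `U β`, and `Z β ∈ D` gives a
contradiction.

Conversely, let `E` be the image of `D` under a sequence, an ultrafilter containing a set of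
size `≤ λ`. If `E` converged nowhere, convex neighbourhoods outside `E` would make
`K = {c | Iic c ∈ E}` clopen. Initial `λ`-compactness shows that a closed set in `E` contains a
point `c` with `Ici c ∈ E`, and one with `Iic c ∈ E`. For `K` the first gives `{c} ∈ E`, for
`Kᶜ` the second contradicts `Ioi c ∈ E`.

Regular ultrafilters exist on every infinite `κ`, since `κ ≃ Finset κ`: take any ultrafilter
finer than `atTop` on `Finset κ` and `Z α = {s | α ∈ s}`. -/

theorem exists_isRegularUltrafilter (κ : Type u) [Infinite κ] :
    ∃ D : Ultrafilter κ, IsRegularUltrafilter D := by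
  obtain ⟨e⟩ : Nonempty (κ ≃ Finset κ) := by rw [← Cardinal.eq, mk_finset_of_infinite]
  refine ⟨(Ultrafilter.of (atTop : Filter (Finset κ))).map e.symm, fun α => {i | α ∈ e i},
    fun α => ?_, fun S hS => ?_⟩
  · have hα : {s | α ∈ s} ∈ Ultrafilter.of (atTop : Filter (Finset κ)) :=
      Ultrafilter.of_le _ <|
        mem_atTop_sets.2 ⟨{α}, fun s hs => Finset.singleton_subset_iff.1 hs⟩
    simpa [Ultrafilter.mem_map, Set.preimage] using hα
  · refine eq_empty_of_forall_notMem fun i hi => hS ?_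
    exact (e i).finite_toSet.subset fun α hα => mem_iInter₂.1 hi α hα

theorem initiallyCompact_of_dCompact {X : Type u} [TopologicalSpace X] {lam : Cardinal.{u}}
    {κ : Type u} (D : Ultrafilter κ) (hD : IsRegularUltrafilter D) (hκ : lam ≤ #κ)
    (hcomp : DCompact D X) : InitiallyCompact X lam := by
  intro 𝒰 hopen hcov hcard
  by_contra! hno
  obtain ⟨Z, hZD, hZfin⟩ := hD
  have : Nonempty 𝒰 := (nonempty_iff_ne_empty.2 fun h => hno ∅ h.ge finite_empty
    (by simpa [h] using hcov)).to_subtype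
  obtain ⟨U, hU⟩ : ∃ U : κ → 𝒰, Function.Surjective U := by
    obtain ⟨g⟩ := hcard.trans hκ
    exact ⟨_, Function.invFun_surjective g.injective⟩
  have hfin : ∀ i, {α | i ∈ Z α}.Finite := fun i => by
    by_contra h
    exact notMem_empty i ((hZfin _ h).subset (mem_iInter₂.2 fun α hα => hα))
  have hpoint : ∀ i, ∃ y, y ∉ ⋃₀ ((fun α => (U α : Set X)) '' {α | i ∈ Z α}) :=
    fun i => (ne_univ_iff_exists_notMem _).1 <|
      hno _ (by rintro _ ⟨α, -, rfl⟩; exact (U α).2) ((hfin i).image _)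
  choose y hy using hpoint
  obtain ⟨p, hp⟩ := hcomp y
  obtain ⟨V, hV, hpV⟩ := mem_sUnion.1 (hcov ▸ mem_univ p)
  obtain ⟨β, hβ⟩ := hU ⟨V, hV⟩
  obtain ⟨i, hiV, hiZ⟩ := D.nonempty_of_mem (inter_mem (hp V (hopen V hV) hpV) (hZD β))
  exact hy i ⟨V, ⟨β, hiZ, congrArg Subtype.val hβ⟩, hiV⟩

section GO

variable {X : Type u} [LinearOrder X]

theorem Ultrafilter.Iic_mem_iff_of_ordConnected_s16 {E : Ultrafilter X} {t : Set X}
    (ht : t.OrdConnected) (htE : t ∉ E) {a b : X} (ha : a ∈ t) (hb : b ∈ t) :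
    Iic a ∈ E ↔ Iic b ∈ E := by
  wlog hab : a ≤ b generalizing a b
  · exact (this hb ha (le_of_not_ge hab)).symm
  have hIoc : Ioc a b ∉ E := fun h =>
    htE (mem_of_superset h (Ioc_subset_Icc_self.trans (ht.out ha hb)))
  rw [← Iic_union_Ioc_eq_Iic hab, Ultrafilter.union_mem_iff]
  simp [hIoc]

variable [TopologicalSpace X]

theorem TopologicalSpace.IsTopologicalBasis.isOpen_Ioi_of_ordConnected [T2Space X]
    {𝓑 : Set (Set X)} (hB : IsTopologicalBasis 𝓑) (hconv : ∀ s ∈ 𝓑, s.OrdConnected)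
    (a : X) : IsOpen (Ioi a) := by
  refine isOpen_iff_forall_mem_open.2 fun p hp => ?_
  obtain ⟨U, V, hU, -, hpU, haV, hUV⟩ := t2_separation hp.ne'
  obtain ⟨s, hsB, hps, hsU⟩ := hB.exists_subset_of_mem_open hpU hU
  refine ⟨s, fun y hy => ?_, hB.isOpen hsB, hps⟩
  by_contra hya
  exact disjoint_left.1 hUV (hsU ((hconv s hsB).out hy hps ⟨not_lt.1 hya, hp.le⟩)) haV

theorem TopologicalSpace.IsTopologicalBasis.isOpen_Iio_of_ordConnected [T2Space X]
    {𝓑 : Set (Set X)} (hB : IsTopologicalBasis 𝓑) (hconv : ∀ s ∈ 𝓑, s.OrdConnected)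
    (a : X) : IsOpen (Iio a) := by
  refine isOpen_iff_forall_mem_open.2 fun p hp => ?_
  obtain ⟨U, V, hU, -, hpU, haV, hUV⟩ := t2_separation hp.ne
  obtain ⟨s, hsB, hps, hsU⟩ := hB.exists_subset_of_mem_open hpU hU
  refine ⟨s, fun y hy => ?_, hB.isOpen hsB, hps⟩
  by_contra hya
  exact disjoint_left.1 hUV (hsU ((hconv s hsB).out hps hy ⟨hp.le, not_lt.1 hya⟩)) haV

theorem InitiallyCompact.exists_mem_lowerBounds {lam : Cardinal.{u}} (hlam : ℵ₀ ≤ lam)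
    (hic : InitiallyCompact X lam) (hIoi : ∀ a : X, IsOpen (Ioi a)) {C S : Set X}
    (hC : IsClosed C) (hSC : S ⊆ C) (hS : #S ≤ lam) (hne : S.Nonempty) :
    ∃ c ∈ C, c ∈ lowerBounds S := by
  by_contra! h
  have hbelow : ∀ c ∈ C, ∃ s ∈ S, s < c := fun c hc => by
    simpa [mem_lowerBounds] using h c hc
  have hcov : ⋃₀ insert Cᶜ (Ioi '' S) = Set.univ := eq_univ_of_forall fun y => by
    by_cases hy : y ∈ C
    · obtain ⟨s, hs, hsy⟩ := hbelow y hy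
      exact ⟨Ioi s, mem_insert_of_mem _ (mem_image_of_mem _ hs), hsy⟩
    · exact ⟨Cᶜ, mem_insert _ _, hy⟩
  have hcard : #(insert Cᶜ (Ioi '' S) : Set (Set X)) ≤ lam :=
    calc _ ≤ #(Ioi '' S) + 1 := mk_insert_le
      _ ≤ lam + 1 := by gcongr; exact mk_image_le.trans hS
      _ = lam := add_one_eq hlam
  obtain ⟨𝒱, h𝒱, h𝒱fin, h𝒱cov⟩ := hic _ (by
    rintro U (rfl | ⟨s, -, rfl⟩)
    exacts [hC.isOpen_compl, hIoi s]) hcov hcard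
  set G := {s ∈ S | Ioi s ∈ 𝒱}
  have hG : ∀ c ∈ C, ∃ g ∈ G, g < c := fun c hc => by
    obtain ⟨V, hV, hcV⟩ := mem_sUnion.1 (h𝒱cov ▸ mem_univ c)
    rcases h𝒱 hV with rfl | ⟨s, hs, rfl⟩
    exacts [absurd hc hcV, ⟨s, ⟨hs, hV⟩, hcV⟩]
  have hGfin : G.Finite := (h𝒱fin.preimage Ioi_injective.injOn).subset fun s hs => hs.2
  obtain ⟨s₀, hs₀⟩ := hne
  obtain ⟨g₀, hg₀, -⟩ := hG s₀ (hSC hs₀)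
  obtain ⟨g, hg, hmin⟩ := exists_min_image G id hGfin ⟨g₀, hg₀⟩
  obtain ⟨g', hg', hlt⟩ := hG g (hSC hg.1)
  exact hlt.not_ge (hmin g' hg')

theorem InitiallyCompact.exists_mem_upperBounds {lam : Cardinal.{u}} (hlam : ℵ₀ ≤ lam)
    (hic : InitiallyCompact X lam) (hIio : ∀ a : X, IsOpen (Iio a)) {C S : Set X}
    (hC : IsClosed C) (hSC : S ⊆ C) (hS : #S ≤ lam) (hne : S.Nonempty) :
    ∃ c ∈ C, c ∈ upperBounds S :=
  InitiallyCompact.exists_mem_lowerBounds (X := Xᵒᵈ) hlam hic hIio hC hSC hS hne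

theorem Ultrafilter.exists_Ici_mem_of_isClosed {lam : Cardinal.{u}} (hlam : ℵ₀ ≤ lam)
    (hic : InitiallyCompact X lam) (hIoi : ∀ a : X, IsOpen (Ioi a)) (E : Ultrafilter X)
    {R : Set X} (hR : R ∈ E) (hRcard : #R ≤ lam) {C : Set X} (hC : IsClosed C) (hCE : C ∈ E) :
    ∃ c ∈ C, Ici c ∈ E := by
  have hCR : C ∩ R ∈ E := inter_mem hCE hR
  obtain ⟨c, hc, hlow⟩ := hic.exists_mem_lowerBounds hlam hIoi hC inter_subset_left
    ((mk_le_mk_of_subset inter_subset_right).trans hRcard) (E.nonempty_of_mem hCR)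
  refine ⟨c, hc, by_contra fun h => ?_⟩
  have hlt : Iio c ∈ E := by simpa using E.compl_mem_iff_notMem.2 h
  obtain ⟨s, hs, hsc⟩ := E.nonempty_of_mem (inter_mem hCR hlt)
  exact (hlow hs).not_gt hsc

theorem Ultrafilter.exists_Iic_mem_of_isClosed {lam : Cardinal.{u}} (hlam : ℵ₀ ≤ lam)
    (hic : InitiallyCompact X lam) (hIio : ∀ a : X, IsOpen (Iio a)) (E : Ultrafilter X)
    {R : Set X} (hR : R ∈ E) (hRcard : #R ≤ lam) {C : Set X} (hC : IsClosed C) (hCE : C ∈ E) :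
    ∃ c ∈ C, Iic c ∈ E :=
  Ultrafilter.exists_Ici_mem_of_isClosed (X := Xᵒᵈ) hlam hic hIio E hR hRcard hC hCE

theorem Ultrafilter.isClopen_setOf_Iic_mem_s16 {𝓑 : Set (Set X)} (hB : IsTopologicalBasis 𝓑)
    (hconv : ∀ s ∈ 𝓑, s.OrdConnected) (E : Ultrafilter X)
    (hE : ∀ p, ¬ (E : Filter X) ≤ 𝓝 p) : IsClopen {c | Iic c ∈ E} := by
  have hloc : IsLocallyConstant fun c => Iic c ∈ E := by
    refine (IsLocallyConstant.iff_exists_open _).2 fun c => ?_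
    obtain ⟨U, hU, hUE⟩ := Filter.not_le.1 (hE c)
    obtain ⟨t, htB, hct, htU⟩ := hB.mem_nhds_iff.1 hU
    have htE : t ∉ E := fun h => hUE (mem_of_superset h htU)
    exact ⟨t, hB.isOpen htB, hct, fun v hv =>
      propext (Ultrafilter.Iic_mem_iff_of_ordConnected_s16 (hconv t htB) htE hv hct)⟩
  simpa using hloc.isClopen_fiber True

theorem Ultrafilter.exists_le_nhds_of_initiallyCompact [T2Space X] {𝓑 : Set (Set X)}
    (hB : IsTopologicalBasis 𝓑) (hconv : ∀ s ∈ 𝓑, s.OrdConnected) {lam : Cardinal.{u}}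
    (hlam : ℵ₀ ≤ lam) (hic : InitiallyCompact X lam) (E : Ultrafilter X) {R : Set X}
    (hR : R ∈ E) (hRcard : #R ≤ lam) : ∃ p, (E : Filter X) ≤ 𝓝 p := by
  by_contra! hE
  have hK := E.isClopen_setOf_Iic_mem_s16 hB hconv hE
  rcases E.mem_or_compl_mem {c | Iic c ∈ E} with hKE | hKE
  · obtain ⟨c, hcK, hc⟩ := E.exists_Ici_mem_of_isClosed hlam hic
      (hB.isOpen_Ioi_of_ordConnected hconv) hR hRcard hK.isClosed hKE
    have hsingleton : {c} ∈ E := by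
      rw [← Icc_self, ← Ici_inter_Iic]
      exact inter_mem hc hcK
    exact hE c ((le_pure_iff.2 hsingleton).trans (pure_le_nhds c))
  · obtain ⟨c, hcK, hc⟩ := E.exists_Iic_mem_of_isClosed hlam hic
      (hB.isOpen_Iio_of_ordConnected hconv) hR hRcard hK.isOpen.isClosed_compl hKE
    exact hcK hc

end GO

theorem dConv_iff_tendsto {I : Type v} {X : Type u} [TopologicalSpace X] {D : Ultrafilter I}
    {x : I → X} {p : X} : DConv D x p ↔ Tendsto x D (𝓝 p) := by
  rw [(nhds_basis_opens p).tendsto_right_iff]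
  exact ⟨fun h U hU => h U hU.2 hU.1, fun h U hU hpU => h U ⟨hpU, hU⟩⟩

theorem dCompact_of_initiallyCompact {X : Type u} [LinearOrder X] [TopologicalSpace X]
    [T2Space X] {𝓑 : Set (Set X)} (hB : IsTopologicalBasis 𝓑)
    (hconv : ∀ s ∈ 𝓑, s.OrdConnected) {lam : Cardinal.{u}} (hlam : ℵ₀ ≤ lam)
    (hic : InitiallyCompact X lam) {κ : Type u} (D : Ultrafilter κ) (hκ : #κ ≤ lam) :
    DCompact D X := fun x => by
  obtain ⟨p, hp⟩ := (D.map x).exists_le_nhds_of_initiallyCompact hB hconv hlam hic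
    range_mem_map (mk_range_le.trans hκ)
  exact ⟨p, dConv_iff_tendsto.2 hp⟩

/-- A GO space is `D`-compact for some regular ultrafilter `D` over `lam` iff it is
initially `lam`-compact. -/
theorem stmt16 (lam : Cardinal.{u}) (hlam : ℵ₀ ≤ lam)
    (X : Type u) [LinearOrder X] [TopologicalSpace X] [T2Space X]
    (hGO : ∃ 𝓑 : Set (Set X), IsTopologicalBasis 𝓑 ∧ ∀ s ∈ 𝓑, s.OrdConnected) :
    (∃ D : Ultrafilter lam.ord.ToType, IsRegularUltrafilter D ∧ DCompact D X) ↔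
      InitiallyCompact X lam := by
  obtain ⟨𝓑, hB, hconv⟩ := hGO
  have hκ : #lam.ord.ToType = lam := mk_ord_toType lam
  constructor
  · rintro ⟨D, hD, hcomp⟩
    exact initiallyCompact_of_dCompact D hD hκ.ge hcomp
  · intro hic
    have : Infinite lam.ord.ToType := by rw [infinite_iff, hκ]; exact hlam
    obtain ⟨D, hD⟩ := exists_isRegularUltrafilter lam.ord.ToType
    exact ⟨D, hD, dCompact_of_initiallyCompact hB hconv hlam hic D hκ.le⟩
end

section
/- Let λ be an infinite cardinal. If X is a topological space that is D-pseudocompact for every ultrafilter D over λ, and Y is a weakly initially λ-compact topological space, then the product X × Y is weakly initially λ-compact. -/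
universe u v

open Set Cardinal Filter Topology TopologicalSpace

/-!
Suppose an open cover `𝒰` of `X × Y` with `#𝒰 ≤ λ` has no finite subfamily with dense union,
and pick for each finite `F ⊆ 𝒰` a nonempty open box `A F ×ˢ B F` missing `⋃₀ F`; the finite
subsets of `𝒰` form a directed set of size at most `λ`. If no point `q ∈ Y` were approached
by every tail of `B`, the open sets `interior (⋂ G ≥ F, (B G)ᶜ)` would form an increasing
cover of `Y` of size at most `λ`, so one of them would be dense, yet it misses the nonempty
open set `B F`. Along an ultrafilter on which `B` approaches `q`, a limit point `p` of `A`
(pseudocompactness along ultrafilters over `λ` passes to any index set of size at most `λ`)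
makes the boxes approach `(p, q)` along every tail. Hence a box `A F ×ˢ B F` with `U ∈ F`
meets a member `U ∋ (p, q)` of `𝒰`, a contradiction.
-/

theorem exists_isOpen_prod_disjoint_of_not_dense {X Y : Type*} [TopologicalSpace X]
    [TopologicalSpace Y] {S : Set (X × Y)} (hS : ¬ Dense S) :
    ∃ A : Set X, ∃ B : Set Y, IsOpen A ∧ A.Nonempty ∧ IsOpen B ∧ B.Nonempty ∧
      Disjoint (A ×ˢ B) S := by
  obtain ⟨z, hz⟩ : (closure S)ᶜ.Nonempty := by
    rwa [nonempty_compl, Ne, ← dense_iff_closure_eq]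
  obtain ⟨A, B, hA, hB, hzA, hzB, hAB⟩ :=
    isOpen_prod_iff.1 isClosed_closure.isOpen_compl z.1 z.2 hz
  exact ⟨A, B, hA, ⟨_, hzA⟩, hB, ⟨_, hzB⟩,
    subset_compl_iff_disjoint_right.1 (hAB.trans (compl_subset_compl.2 subset_closure))⟩

section

variable {Y : Type u} [TopologicalSpace Y] {lam : Cardinal.{u}}
  {ι : Type u} [Preorder ι] [IsDirectedOrder ι] [Nonempty ι]

theorem WeakInitiallyCompact.exists_dense_of_monotone (hY : WeakInitiallyCompact Y lam)
    (hι : #ι ≤ lam) {W : ι → Set Y} (hWo : ∀ i, IsOpen (W i)) (hW : Monotone W)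
    (hcov : ⋃ i, W i = Set.univ) : ∃ i, Dense (W i) := by
  obtain ⟨𝒱, h𝒱W, h𝒱fin, h𝒱dense⟩ :=
    hY (range W) (forall_mem_range.2 hWo) (sUnion_range W ▸ hcov) (mk_range_le.trans hι)
  choose! g hg using fun V (hV : V ∈ 𝒱) => h𝒱W hV
  obtain ⟨i, hi⟩ := (h𝒱fin.image g).bddAbove
  refine ⟨i, h𝒱dense.mono (sUnion_subset fun V hV => ?_)⟩
  rw [← hg V hV]
  exact hW (hi (mem_image_of_mem g hV))

theorem WeakInitiallyCompact.exists_frequently_mem (hY : WeakInitiallyCompact Y lam)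
    (hι : #ι ≤ lam) {B : ι → Set Y} (hBo : ∀ i, IsOpen (B i))
    (hBne : ∀ i, (B i).Nonempty) :
    ∃ q, ∃ᶠ w in atTop ×ˢ 𝓝 q, w.2 ∈ B w.1 := by
  by_contra! h
  let W : ι → Set Y := fun i => interior {y | ∀ j, i ≤ j → y ∉ B j}
  have hW : Monotone W := fun i i' hii' =>
    interior_mono fun y hy j hj => hy j (hii'.trans hj)
  have hcov : ⋃ i, W i = Set.univ := by
    refine eq_univ_of_forall fun q => mem_iUnion.2 ?_
    obtain ⟨P, hP, Q, hQ, hPQ⟩ := eventually_prod_iff.1 (h q)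
    obtain ⟨i, hi⟩ := eventually_atTop.1 hP
    exact ⟨i, mem_interior_iff_mem_nhds.2
      (mem_of_superset hQ fun y hy j hj => hPQ (hi j hj) hy)⟩
  obtain ⟨i, hi⟩ := hY.exists_dense_of_monotone hι (fun i => isOpen_interior) hW hcov
  obtain ⟨y, hyB, hyW⟩ := hi.inter_open_nonempty _ (hBo i) (hBne i)
  exact interior_subset hyW i le_rfl hyB

end

theorem dPseudocompact_of_mk_le {X : Type*} [TopologicalSpace X] {ι κ : Type v}
    (hX : ∀ D : Ultrafilter κ, DPseudocompact D X) (hικ : #ι ≤ #κ) (D : Ultrafilter ι) :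
    DPseudocompact D X := by
  intro O hOo hOne
  obtain ⟨e⟩ := hικ
  have : Nonempty ι := nonempty_iff_univ_nonempty.2 (D.nonempty_of_mem univ_mem)
  obtain ⟨p, hp⟩ := hX (D.map e) (O ∘ Function.invFun e) (fun _ => hOo _) (fun _ => hOne _)
  refine ⟨p, fun U hU => ?_⟩
  simpa only [Ultrafilter.mem_map, preimage_ofPred_eq, Function.comp_apply,
    Function.leftInverse_invFun e.injective _] using hp U hU

theorem exists_frequently_mem_prod {X Y ι : Type*} [TopologicalSpace X] [TopologicalSpace Y]
    (hX : ∀ D : Ultrafilter ι, DPseudocompact D X) {l : Filter ι} {A : ι → Set X}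
    (hAo : ∀ i, IsOpen (A i)) (hAne : ∀ i, (A i).Nonempty) {B : ι → Set Y} {q : Y}
    (hq : ∃ᶠ w in l ×ˢ 𝓝 q, w.2 ∈ B w.1) :
    ∃ p, ∃ᶠ w in l ×ˢ 𝓝 (p, q), w.2 ∈ A w.1 ×ˢ B w.1 := by
  have := frequently_iff_neBot.1 hq
  set 𝒢 := Ultrafilter.of (l ×ˢ 𝓝 q ⊓ 𝓟 {w | w.2 ∈ B w.1})
  obtain ⟨p, hp⟩ := hX (𝒢.map Prod.fst) A hAo hAne
  refine ⟨p, frequently_iff.2 fun hU => ?_⟩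
  rw [nhds_prod_eq] at hU
  obtain ⟨s, hs, t, ht, hst⟩ := mem_prod_iff.1 hU
  obtain ⟨N, hN, M, hM, hNM⟩ := mem_prod_iff.1 ht
  have hsMB : (s ×ˢ M) ∩ {w | w.2 ∈ B w.1} ∈ 𝒢 :=
    Ultrafilter.of_le _ (inter_mem_inf (prod_mem_prod hs hM) (mem_principal_self _))
  obtain ⟨⟨j, y⟩, ⟨a, haN, haA⟩, ⟨hjs, hyM⟩, hyB⟩ :=
    Filter.nonempty_of_mem (inter_mem (Ultrafilter.mem_map.1 (hp N hN)) hsMB)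
  exact ⟨(j, (a, y)), hst ⟨hjs, hNM ⟨haN, hyM⟩⟩, haA, hyB⟩

theorem stmt19_general (lam : Cardinal.{u})
    (X Y : Type u) [TopologicalSpace X] [TopologicalSpace Y]
    (hX : ∀ D : Ultrafilter lam.ord.ToType, DPseudocompact D X)
    (hY : WeakInitiallyCompact Y lam) :
    WeakInitiallyCompact (X × Y) lam := by
  intro 𝒰 hopen hcov hcard
  by_contra! hnd
  have : Infinite 𝒰 :=
    infinite_coe_iff.2 fun hfin => hnd 𝒰 subset_rfl hfin (hcov ▸ dense_univ)
  have hι : #(Finset 𝒰) ≤ lam := (mk_finset_of_infinite 𝒰).trans_le hcard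
  choose A B hAo hAne hBo hBne hAB using fun F : Finset 𝒰 =>
    exists_isOpen_prod_disjoint_of_not_dense
      (hnd _ (Subtype.coe_image_subset _ F) (F.finite_toSet.image _))
  obtain ⟨q, hq⟩ := hY.exists_frequently_mem hι hBo hBne
  obtain ⟨p, hpq⟩ := exists_frequently_mem_prod
    (dPseudocompact_of_mk_le hX (hι.trans_eq (mk_ord_toType lam).symm)) hAo hAne hq
  obtain ⟨U, hU, hpqU⟩ := sUnion_eq_univ_iff.1 hcov (p, q)
  have hnear :
      ∀ᶠ w in atTop ×ˢ 𝓝 (p, q), ({⟨U, hU⟩} : Finset 𝒰) ≤ w.1 ∧ w.2 ∈ U :=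
    (eventually_ge_atTop _).prod_mk ((hopen U hU).mem_nhds hpqU)
  obtain ⟨⟨F, z⟩, hz, hUF, hzU⟩ := (hpq.and_eventually hnear).exists
  exact disjoint_left.1 (hAB F) hz
    ⟨U, ⟨⟨U, hU⟩, hUF (Finset.mem_singleton_self _), rfl⟩, hzU⟩

/-- If `X` is `D`-pseudocompact for every ultrafilter `D` over `lam` and `Y` is weakly
initially `lam`-compact, then `X × Y` is weakly initially `lam`-compact. -/
theorem stmt19 (lam : Cardinal.{u}) (hlam : ℵ₀ ≤ lam)
    (X Y : Type u) [TopologicalSpace X] [TopologicalSpace Y]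
    (hX : ∀ D : Ultrafilter lam.ord.ToType, DPseudocompact D X)
    (hY : WeakInitiallyCompact Y lam) :
    WeakInitiallyCompact (X × Y) lam :=
  stmt19_general lam X Y hX hY
end
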